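/- Rules (9) and (10) are inverses: if S is a face sequence of type 9 and S′ is the result of applying rule (9) to S, then S′ is a face sequence of type 10 and applying rule (10) to S′ returns S; conversely, if T is a face sequence of type 10 and T′ is the result of applying rule (10) to T, then T′ is of type 9 (in particular T′ ≠ v₀) and applying rule (9) to T′ returns T. -/

import Mathlib

set_option linter.unusedVariables false

/-- The alphabet `{0, 1, ∗}` for face sequences. -/
inductive Letter : Type
  | zero
  | one
  | star
  deriving DecidableEq

/-- A sequence of length `n` over the alphabet `{0, 1, ∗}`. -/
abbrev FSeq (n : ℕ) := Fin n → Letter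

/-- `S(1)`, the number of `1`'s in `S`. -/
def count1 {n : ℕ} (S : FSeq n) : ℕ := (Finset.univ.filter fun i => S i = Letter.one).card

/-- `S(0)`, the number of `0`'s in `S`. -/
def count0 {n : ℕ} (S : FSeq n) : ℕ := (Finset.univ.filter fun i => S i = Letter.zero).card

/-- The number of `∗`'s in `S`. -/
def countStar {n : ℕ} (S : FSeq n) : ℕ := (Finset.univ.filter fun i => S i = Letter.star).card

/-- A face sequence: either no `∗` and exactly `k` ones, or at most `k-1` ones and
(#ones) + (#stars) ≥ `k+1`. -/
def FaceSeq {n : ℕ} (k : ℕ) (S : FSeq n) : Prop :=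
  (countStar S = 0 ∧ count1 S = k) ∨ (count1 S + 1 ≤ k ∧ k + 1 ≤ count1 S + countStar S)

/-- `v₀`, the sequence of `k` ones followed by `n - k` zeros. -/
def v0seq (n k : ℕ) : FSeq n := fun i => if (i : ℕ) < k then Letter.one else Letter.zero

/-- `S` contains at least one `∗`. -/
def hasStar {n : ℕ} (S : FSeq n) : Prop := ∃ i, S i = Letter.star

/-- There is a `1` to the right of the rightmost `∗` (in particular `S` contains a `∗`). -/
def OneRight {n : ℕ} (S : FSeq n) : Prop :=
  hasStar S ∧ ∃ i, S i = Letter.one ∧ ∀ j, i < j → S j ≠ Letter.star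

/-- There is no `1` to the right of the rightmost `∗` (and `S` contains a `∗`). -/
def NoOneRight {n : ℕ} (S : FSeq n) : Prop :=
  hasStar S ∧ ∀ i, S i = Letter.one → ∃ j, i < j ∧ S j = Letter.star

/-- There is a `0` to the left of the leftmost `∗` (in particular `S` contains a `∗`). -/
def ZeroLeft {n : ℕ} (S : FSeq n) : Prop :=
  hasStar S ∧ ∃ i, S i = Letter.zero ∧ ∀ j, j < i → S j ≠ Letter.star

/-- There is no `0` to the left of the leftmost `∗` (and `S` contains a `∗`). -/
def NoZeroLeft {n : ℕ} (S : FSeq n) : Prop :=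
  hasStar S ∧ ∀ i, S i = Letter.zero → ∃ j, j < i ∧ S j = Letter.star

/-- `i` is the position of the rightmost `1` of `S`. -/
def IsRightmostOne {n : ℕ} (S : FSeq n) (i : Fin n) : Prop :=
  S i = Letter.one ∧ ∀ j, i < j → S j ≠ Letter.one

/-- `i` is the position of the rightmost `∗` of `S`. -/
def IsRightmostStar {n : ℕ} (S : FSeq n) (i : Fin n) : Prop :=
  S i = Letter.star ∧ ∀ j, i < j → S j ≠ Letter.star

/-- `i` is the position of the leftmost `0` of `S`. -/
def IsLeftmostZero {n : ℕ} (S : FSeq n) (i : Fin n) : Prop :=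
  S i = Letter.zero ∧ ∀ j, j < i → S j ≠ Letter.zero

/-- `i` is the position of the leftmost `∗` of `S`. -/
def IsLeftmostStar {n : ℕ} (S : FSeq n) (i : Fin n) : Prop :=
  S i = Letter.star ∧ ∀ j, j < i → S j ≠ Letter.star

/-- Condition of rule (1), subcondition (a). -/
def Cond1a {n : ℕ} (k m0 m1 : ℕ) (S : FSeq n) : Prop :=
  count1 S + 1 ≤ k ∧ OneRight S ∧ count1 S ≠ m1

/-- Condition of rule (1), subcondition (b). -/
def Cond1b {n : ℕ} (k m0 m1 : ℕ) (S : FSeq n) : Prop :=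
  count1 S + 1 ≤ k ∧ OneRight S ∧ count1 S = m1 ∧ m0 < count0 S

/-- Condition of rule (1), subcondition (c): no `0` to the left of the leftmost `∗`. -/
def Cond1c {n : ℕ} (k m0 m1 : ℕ) (S : FSeq n) : Prop :=
  count1 S + 1 ≤ k ∧ OneRight S ∧ count1 S = m1 ∧ count0 S = m0 ∧ NoZeroLeft S

/-- Condition of rule (2), subcondition (a): here `count1 S + 1 ≠ m1` encodes `S(1) ≠ m₁ - 1`. -/
def Cond2a {n : ℕ} (k m0 m1 : ℕ) (S : FSeq n) : Prop :=
  count1 S + 2 ≤ k ∧ NoOneRight S ∧ count1 S + 1 ≠ m1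

/-- Condition of rule (2), subcondition (b). -/
def Cond2b {n : ℕ} (k m0 m1 : ℕ) (S : FSeq n) : Prop :=
  count1 S + 2 ≤ k ∧ NoOneRight S ∧ count1 S + 1 = m1 ∧ m0 < count0 S

/-- Condition of rule (2), subcondition (c). -/
def Cond2c {n : ℕ} (k m0 m1 : ℕ) (S : FSeq n) : Prop :=
  count1 S + 2 ≤ k ∧ NoOneRight S ∧ count1 S + 1 = m1 ∧ count0 S = m0 ∧ NoZeroLeft S

/-- `S` is of type 1 (satisfies the condition of rule (1)). -/
def Type1 {n : ℕ} (k m0 m1 : ℕ) (S : FSeq n) : Prop :=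
  Cond1a k m0 m1 S ∨ Cond1b k m0 m1 S ∨ Cond1c k m0 m1 S

/-- `S` is of type 2 (satisfies the condition of rule (2)). -/
def Type2 {n : ℕ} (k m0 m1 : ℕ) (S : FSeq n) : Prop :=
  Cond2a k m0 m1 S ∨ Cond2b k m0 m1 S ∨ Cond2c k m0 m1 S

/-- `S` is of type 3: `S(1) = k-1`, `S(0) ≤ n-k-1`, no `1` right of the rightmost `∗`,
a `0` left of the leftmost `∗`. -/
def Type3 {n : ℕ} (k : ℕ) (S : FSeq n) : Prop :=
  count1 S + 1 = k ∧ count0 S + k + 1 ≤ n ∧ NoOneRight S ∧ ZeroLeft S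

/-- `S` is of type 4: `S(1) = k-1`, `S(0) ≤ n-k-2`, no `1` right of the rightmost `∗`,
no `0` left of the leftmost `∗`. -/
def Type4 {n : ℕ} (k : ℕ) (S : FSeq n) : Prop :=
  count1 S + 1 = k ∧ count0 S + k + 2 ≤ n ∧ NoOneRight S ∧ NoZeroLeft S

/-- `S` is of type 5: `S(1) = m₁`, `S(0) ≤ m₀`, a `1` right of the rightmost `∗`,
a `0` left of the leftmost `∗`. -/
def Type5 {n : ℕ} (m0 m1 : ℕ) (S : FSeq n) : Prop :=
  count1 S = m1 ∧ count0 S ≤ m0 ∧ OneRight S ∧ ZeroLeft S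

/-- `S` is of type 6: `S(1) = m₁`, `S(0) < m₀`, a `1` right of the rightmost `∗`,
no `0` left of the leftmost `∗`. -/
def Type6 {n : ℕ} (m0 m1 : ℕ) (S : FSeq n) : Prop :=
  count1 S = m1 ∧ count0 S < m0 ∧ OneRight S ∧ NoZeroLeft S

/-- `S` is of type 7: `S(1) = m₁-1`, `S(0) ≤ m₀`, no `1` right of the rightmost `∗`,
a `0` left of the leftmost `∗`. -/
def Type7 {n : ℕ} (m0 m1 : ℕ) (S : FSeq n) : Prop :=
  count1 S + 1 = m1 ∧ count0 S ≤ m0 ∧ NoOneRight S ∧ ZeroLeft S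

/-- `S` is of type 8: `S(1) = m₁-1`, `S(0) < m₀`, no `1` right of the rightmost `∗`,
no `0` left of the leftmost `∗`. -/
def Type8 {n : ℕ} (m0 m1 : ℕ) (S : FSeq n) : Prop :=
  count1 S + 1 = m1 ∧ count0 S < m0 ∧ NoOneRight S ∧ NoZeroLeft S

/-- `S` is of type 9: `S(1) = k`, `S(0) = n-k`, and `S ≠ v₀`. -/
def Type9 {n : ℕ} (k : ℕ) (S : FSeq n) : Prop :=
  count1 S = k ∧ count0 S + k = n ∧ S ≠ v0seq n k

/-- `S` is of type 10: `S(1) = k-1`, `S(0) = n-k-1`, no `1` right of the rightmost `∗`,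
no `0` left of the leftmost `∗`. -/
def Type10 {n : ℕ} (k : ℕ) (S : FSeq n) : Prop :=
  count1 S + 1 = k ∧ count0 S + k + 1 = n ∧ NoOneRight S ∧ NoZeroLeft S

/-- `S` is of type `i` for `1 ≤ i ≤ 10` (and of no type otherwise). -/
def OfType {n : ℕ} (k m0 m1 : ℕ) (i : ℕ) (S : FSeq n) : Prop :=
  match i with
  | 1 => Type1 k m0 m1 S
  | 2 => Type2 k m0 m1 S
  | 3 => Type3 k S
  | 4 => Type4 k S
  | 5 => Type5 m0 m1 S
  | 6 => Type6 m0 m1 S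
  | 7 => Type7 m0 m1 S
  | 8 => Type8 m0 m1 S
  | 9 => Type9 k S
  | 10 => Type10 k S
  | _ => False

/-- The replacement of rule (1): replace the rightmost `1` with `∗`. -/
def Apply1 {n : ℕ} (S S' : FSeq n) : Prop :=
  ∃ i, IsRightmostOne S i ∧ S' = Function.update S i Letter.star

/-- The replacement of rule (2): replace the rightmost `∗` with `1`. -/
def Apply2 {n : ℕ} (S S' : FSeq n) : Prop :=
  ∃ i, IsRightmostStar S i ∧ S' = Function.update S i Letter.one

/-- The replacement of rules (3), (5) and (7): replace the leftmost `0` with `∗`. -/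
def Apply3 {n : ℕ} (S S' : FSeq n) : Prop :=
  ∃ i, IsLeftmostZero S i ∧ S' = Function.update S i Letter.star

/-- The replacement of rules (4), (6) and (8): replace the leftmost `∗` with `0`. -/
def Apply4 {n : ℕ} (S S' : FSeq n) : Prop :=
  ∃ i, IsLeftmostStar S i ∧ S' = Function.update S i Letter.zero

/-- The replacement of rule (9): replace the leftmost `0` and the rightmost `1` each with `∗`. -/
def Apply9 {n : ℕ} (S S' : FSeq n) : Prop :=
  ∃ i j, IsLeftmostZero S i ∧ IsRightmostOne S j ∧
    S' = Function.update (Function.update S i Letter.star) j Letter.star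

/-- The replacement of rule (10): replace the leftmost `∗` with `0` and the other `∗` with `1`. -/
def Apply10 {n : ℕ} (S S' : FSeq n) : Prop :=
  ∃ i j, IsLeftmostStar S i ∧ IsRightmostStar S j ∧ i ≠ j ∧
    S' = Function.update (Function.update S i Letter.zero) j Letter.one

/-- The matching `V` on face sequences: a face sequence `S` of type 1, 3, 5, 7 or 9 is
matched with the result `S'` of applying the corresponding rule to it. -/
def Vmatch {n : ℕ} (k m0 m1 : ℕ) (S S' : FSeq n) : Prop :=
  FaceSeq k S ∧
    ((Type1 k m0 m1 S ∧ Apply1 S S') ∨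
     (Type3 k S ∧ Apply3 S S') ∨
     (Type5 m0 m1 S ∧ Apply3 S S') ∨
     (Type7 m0 m1 S ∧ Apply3 S S') ∨
     (Type9 k S ∧ Apply9 S S'))

/-- The vertex set of a face sequence `S`: the vertex sequences (0/1-sequences with
exactly `k` ones) agreeing with `S` wherever `S` is not `∗`. -/
def VertexSet {n : ℕ} (k : ℕ) (S : FSeq n) : Set (FSeq n) :=
  {v | (∀ i, v i ≠ Letter.star) ∧ count1 v = k ∧ ∀ i, S i ≠ Letter.star → v i = S i}

/-- The dimension of the face `F(S)`. -/
def fdim {n : ℕ} (S : FSeq n) : ℕ :=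
  if countStar S = 0 then 0 else countStar S - 1

/-- `T` is a codimension-1 face of `S`. -/
def Codim1 {n : ℕ} (k : ℕ) (T S : FSeq n) : Prop :=
  VertexSet k T ⊂ VertexSet k S ∧ fdim T + 1 = fdim S

/-- A (nontrivial) `V`-path `a₀, b₀, a₁, b₁, …, b_r, a_{r+1}` of face sequences. -/
structure VPath (n k m0 m1 r : ℕ) where
  a : Fin (r + 2) → FSeq n
  b : Fin (r + 1) → FSeq n
  face_a : ∀ i, FaceSeq k (a i)
  face_b : ∀ i, FaceSeq k (b i)
  mem : ∀ i : Fin (r + 1), Vmatch k m0 m1 (a i.castSucc) (b i)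
  codim_left : ∀ i : Fin (r + 1), Codim1 k (a i.castSucc) (b i)
  codim_right : ∀ i : Fin (r + 1), Codim1 k (a i.succ) (b i)
  step_ne : ∀ i : Fin (r + 1), a i.castSucc ≠ a i.succ

/-! A type-9 sequence has no `∗`, and it differs from `v₀` exactly when its leftmost `0` lies
left of its rightmost `1`; rule (9) stars these two positions `i < j`. A type-10 sequence has
exactly two `∗`'s, at positions `i < j`, and rule (10) writes `0` at `i` and `1` at `j`. Since
nothing outside `{i, j}` changes, "no `1` right of the rightmost `∗`" and "no `0` left of the
leftmost `∗`" for the starred sequence say precisely that `j` is the rightmost `1` and `i` the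
leftmost `0` of the unstarred one, and the letter counts shift by one in the required way. -/

open Finset Function

section Update

variable {ι α : Type*} [DecidableEq ι]

theorem update_update_update_update_eq_self {f : ι → α} {i j : ι} {a b a' b' : α}
    (hij : i ≠ j) (ha' : f i = a') (hb' : f j = b') :
    update (update (update (update f i a) j b) i a') j b' = f := by
  rw [update_comm hij, update_idem, update_comm hij.symm, update_idem, ← ha', ← hb',
    update_eq_self, update_eq_self]

theorem apply_eq_of_update_update_apply_eq {f : ι → α} {i j p : ι} {a b c : α}
    (h : update (update f i a) j b p = c) (ha : a ≠ c) (hb : b ≠ c) :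
    f p = c ∧ p ≠ i ∧ p ≠ j := by
  have hpj : p ≠ j := by rintro rfl; simp [hb] at h
  have hpi : p ≠ i := by rintro rfl; simp [update_of_ne hpj, ha] at h
  rw [update_of_ne hpj, update_of_ne hpi] at h
  exact ⟨h, hpi, hpj⟩

variable [Fintype ι] [DecidableEq α]

theorem card_filter_update_add (f : ι → α) (i : ι) (b c : α) :
    #{p | update f i b p = c} + (if f i = c then 1 else 0)
      = #{p | f p = c} + (if b = c then 1 else 0) := by
  have hsum : (fun p => if update f i b p = c then 1 else 0)
      = update (fun p => if f p = c then 1 else 0) i (if b = c then 1 else 0) := by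
    funext p
    by_cases hp : p = i <;> simp [hp]
  rw [card_filter, card_filter, hsum, sum_update_of_mem (mem_univ i),
    ← add_sum_erase _ _ (mem_univ i), sdiff_singleton_eq_erase]
  ring

theorem card_filter_update_update_add (f : ι → α) {i j : ι} (hij : i ≠ j) (a b c : α) :
    #{p | update (update f i a) j b p = c} + (if f i = c then 1 else 0)
        + (if f j = c then 1 else 0)
      = #{p | f p = c} + (if a = c then 1 else 0) + (if b = c then 1 else 0) := by
  have hj := card_filter_update_add (update f i a) j b c
  have hi := card_filter_update_add f i a c
  rw [update_of_ne hij.symm] at hj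
  omega

end Update

section Counting

variable {n : ℕ}

theorem count0_add_count1_add_countStar (S : FSeq n) :
    count0 S + count1 S + countStar S = n := by
  have hletter : ∀ p, ((if S p = .zero then 1 else 0) + (if S p = .one then 1 else 0)
      + (if S p = .star then 1 else 0) : ℕ) = 1 := by
    intro p
    cases S p <;> simp
  simp only [count0, count1, countStar, card_filter, ← sum_add_distrib, hletter, sum_const,
    card_univ, Fintype.card_fin, smul_eq_mul, mul_one]

theorem ne_star_of_countStar_eq_zero {S : FSeq n} (h : countStar S = 0) (p : Fin n) :
    S p ≠ .star := by
  simpa using filter_eq_empty_iff.mp (card_eq_zero.mp h) (mem_univ p)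

theorem counts_rule9 {S : FSeq n} {i j : Fin n} (hij : i ≠ j) (hi : S i = .zero)
    (hj : S j = .one) :
    count0 (update (update S i .star) j .star) + 1 = count0 S ∧
      count1 (update (update S i .star) j .star) + 1 = count1 S ∧
      countStar (update (update S i .star) j .star) = countStar S + 2 := by
  refine ⟨?_, ?_, ?_⟩
  · simpa [count0, hi, hj] using card_filter_update_update_add S hij .star .star .zero
  · simpa [count1, hi, hj] using card_filter_update_update_add S hij .star .star .one
  · simpa [countStar, hi, hj] using card_filter_update_update_add S hij .star .star .star

theorem counts_rule10 {T : FSeq n} {i j : Fin n} (hij : i ≠ j) (hi : T i = .star)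
    (hj : T j = .star) :
    count0 (update (update T i .zero) j .one) = count0 T + 1 ∧
      count1 (update (update T i .zero) j .one) = count1 T + 1 ∧
      countStar (update (update T i .zero) j .one) + 2 = countStar T := by
  refine ⟨?_, ?_, ?_⟩
  · simpa [count0, hi, hj] using card_filter_update_update_add T hij .zero .one .zero
  · simpa [count1, hi, hj] using card_filter_update_update_add T hij .zero .one .one
  · simpa [countStar, hi, hj] using card_filter_update_update_add T hij .zero .one .star

end Counting

section Positions

variable {n : ℕ}

theorem lt_of_v0seq_eq_one_of_v0seq_eq_zero {k : ℕ} {p q : Fin n} (hq : v0seq n k q = .one)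
    (hp : v0seq n k p = .zero) : q < p := by
  unfold v0seq at hp hq
  split_ifs at hp hq
  exact Fin.lt_def.mpr (by omega)

theorem eq_v0seq_of_forall_lt {S : FSeq n} (hS : ∀ p, S p ≠ .star)
    (hlt : ∀ p q, S q = .one → S p = .zero → q < p) : S = v0seq n (count1 S) := by
  funext p
  have ones_below (hp : S p = .one) : (p : ℕ) < count1 S := by
    have hsub : Iic p ⊆ univ.filter fun q => S q = .one := by
      intro q hq
      rw [mem_Iic] at hq
      rw [mem_filter]
      refine ⟨mem_univ q, ?_⟩
      cases hSq : S q with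
      | zero => exact absurd (hlt q p hp hSq) (not_lt.mpr hq)
      | one => rfl
      | star => exact absurd hSq (hS q)
    simpa [count1, Fin.card_Iic] using card_le_card hsub
  have zeros_above (hp : S p = .zero) : count1 S ≤ p := by
    have hsub : (univ.filter fun q => S q = .one) ⊆ Iio p := by
      intro q hq
      rw [mem_filter] at hq
      exact mem_Iio.mpr (hlt p q hq.2 hp)
    simpa [count1, Fin.card_Iio] using card_le_card hsub
  cases hSp : S p with
  | zero => simp [v0seq, not_lt.mpr (zeros_above hSp)]
  | one => simp [v0seq, ones_below hSp]
  | star => exact absurd hSp (hS p)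

theorem lt_of_isLeftmostZero_of_isRightmostOne {S : FSeq n} {i j : Fin n}
    (hS : ∀ p, S p ≠ .star) (hi : IsLeftmostZero S i) (hj : IsRightmostOne S j)
    (hne : S ≠ v0seq n (count1 S)) : i < j := by
  by_contra! hji
  have hji' : j ≠ i := fun h => absurd ((h ▸ hj.1).symm.trans hi.1) (by decide)
  refine hne (eq_v0seq_of_forall_lt hS fun p q hq hp => ?_)
  have hqj : q ≤ j := not_lt.mp fun h => hj.2 q h hq
  have hip : i ≤ p := not_lt.mp fun h => hi.2 p h hp
  exact hqj.trans_lt ((lt_of_le_of_ne hji hji').trans_le hip)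

theorem lt_of_isLeftmostStar_of_isRightmostStar {S : FSeq n} {i j : Fin n}
    (hi : IsLeftmostStar S i) (hj : IsRightmostStar S j) (hij : i ≠ j) : i < j :=
  lt_of_le_of_ne (not_lt.mp fun h => hi.2 j h hj.1) hij

theorem rule9_isLeftmostStar_isRightmostStar {S : FSeq n} {i j : Fin n}
    (hS : ∀ p, S p ≠ .star) (hij : i < j) :
    IsLeftmostStar (update (update S i .star) j .star) i ∧
      IsRightmostStar (update (update S i .star) j .star) j := by
  refine ⟨⟨by simp [update_of_ne hij.ne], fun p hp => ?_⟩, ⟨by simp, fun p hp => ?_⟩⟩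
  · rw [update_of_ne (hp.trans hij).ne, update_of_ne hp.ne]
    exact hS p
  · rw [update_of_ne hp.ne', update_of_ne (hij.trans hp).ne']
    exact hS p

theorem rule9_noOneRight_noZeroLeft {S : FSeq n} {i j : Fin n}
    (hi : IsLeftmostZero S i) (hj : IsRightmostOne S j) (hij : i < j) :
    NoOneRight (update (update S i .star) j .star) ∧
      NoZeroLeft (update (update S i .star) j .star) := by
  refine ⟨⟨⟨j, by simp⟩, fun p hp => ?_⟩, ⟨⟨j, by simp⟩, fun p hp => ?_⟩⟩
  · obtain ⟨hSp, -, hpj⟩ := apply_eq_of_update_update_apply_eq hp (by decide) (by decide)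
    exact ⟨j, lt_of_le_of_ne (not_lt.mp fun h => hj.2 p h hSp) hpj, by simp⟩
  · obtain ⟨hSp, hpi, -⟩ := apply_eq_of_update_update_apply_eq hp (by decide) (by decide)
    exact ⟨i, lt_of_le_of_ne (not_lt.mp fun h => hi.2 p h hSp) hpi.symm,
      by simp [update_of_ne hij.ne]⟩

theorem rule10_isLeftmostZero_isRightmostOne {T : FSeq n} {i j : Fin n}
    (hi : IsLeftmostStar T i) (hj : IsRightmostStar T j) (hij : i < j)
    (hone : NoOneRight T) (hzero : NoZeroLeft T) :
    IsLeftmostZero (update (update T i .zero) j .one) i ∧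
      IsRightmostOne (update (update T i .zero) j .one) j := by
  refine ⟨⟨by simp [update_of_ne hij.ne], fun p hp hp0 => ?_⟩, ⟨by simp, fun p hp hp1 => ?_⟩⟩
  · rw [update_of_ne (hp.trans hij).ne, update_of_ne hp.ne] at hp0
    obtain ⟨q, hqp, hq⟩ := hzero.2 p hp0
    exact hi.2 q (hqp.trans hp) hq
  · rw [update_of_ne hp.ne', update_of_ne (hij.trans hp).ne'] at hp1
    obtain ⟨q, hpq, hq⟩ := hone.2 p hp1
    exact hj.2 q (hp.trans hpq) hq

end Positions

theorem rule9_rule10_inverse_general (n k : ℕ) :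
    (∀ S S' : FSeq n, FaceSeq k S → Type9 k S → Apply9 S S' →
      FaceSeq k S' ∧ Type10 k S' ∧ Apply10 S' S) ∧
    (∀ T T' : FSeq n, FaceSeq k T → Type10 k T → Apply10 T T' →
      FaceSeq k T' ∧ Type9 k T' ∧ Apply9 T' T) := by
  constructor
  · rintro S _ - ⟨h1, h0, hne⟩ ⟨i, j, hi, hj, rfl⟩
    have hS : ∀ p, S p ≠ .star := ne_star_of_countStar_eq_zero <| by
      have := count0_add_count1_add_countStar S
      omega
    have hij : i < j := lt_of_isLeftmostZero_of_isRightmostOne hS hi hj (h1 ▸ hne)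
    obtain ⟨c0, c1, cs⟩ := counts_rule9 hij.ne hi.1 hj.1
    obtain ⟨hli, hrj⟩ := rule9_isLeftmostStar_isRightmostStar hS hij
    obtain ⟨hone, hzero⟩ := rule9_noOneRight_noZeroLeft hi hj hij
    exact ⟨Or.inr ⟨by omega, by omega⟩, ⟨by omega, by omega, hone, hzero⟩, i, j, hli, hrj,
      hij.ne, (update_update_update_update_eq_self hij.ne hi.1 hj.1).symm⟩
  · rintro T _ - ⟨h1, h0, hone, hzero⟩ ⟨i, j, hi, hj, hne, rfl⟩
    have hij := lt_of_isLeftmostStar_of_isRightmostStar hi hj hne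
    obtain ⟨c0, c1, cs⟩ := counts_rule10 hne hi.1 hj.1
    have htot := count0_add_count1_add_countStar T
    obtain ⟨hli, hrj⟩ := rule10_isLeftmostZero_isRightmostOne hi hj hij hone hzero
    have hne_v0 : update (update T i .zero) j .one ≠ v0seq n k := fun h =>
      lt_asymm hij (lt_of_v0seq_eq_one_of_v0seq_eq_zero (h ▸ hrj.1) (h ▸ hli.1))
    exact ⟨Or.inl ⟨by omega, by omega⟩, ⟨by omega, by omega, hne_v0⟩, i, j, hli, hrj,
      (update_update_update_update_eq_self hne hi.1 hj.1).symm⟩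

/-- **Rules (9) and (10) are inverses of each other; in particular the result of rule (10) is never `v₀`.** -/
theorem rule9_rule10_inverse (n k m0 m1 : ℕ) (hk1 : 1 ≤ k) (hk2 : k ≤ n - 1)
    (hm0 : m0 + k + 1 ≤ n) (hm1l : 1 ≤ m1) (hm1u : m1 + 1 ≤ k) :
    (∀ S S' : FSeq n, FaceSeq k S → Type9 k S → Apply9 S S' →
      FaceSeq k S' ∧ Type10 k S' ∧ Apply10 S' S) ∧
    (∀ T T' : FSeq n, FaceSeq k T → Type10 k T → Apply10 T T' →
      FaceSeq k T' ∧ Type9 k T' ∧ Apply9 T' T) :=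
  rule9_rule10_inverse_general n k
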